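/- Let j_c > 0, γ > 0, and let Ω ⊆ ℝ³ be a Lebesgue-measurable set. For all measurable functions f, g : Ω → ℝ³ with ∫_Ω |f|² dx < ∞ and ∫_Ω |g|² dx < ∞, the function x ↦ (Λ_γ(f(x)) − Λ_γ(g(x))) · (f(x) − g(x)) is integrable on Ω and ∫_Ω (Λ_γ(f(x)) − Λ_γ(g(x))) · (f(x) − g(x)) dx ≥ 0. -/
import Mathlib


open scoped RealInnerProductSpace Topology

/-- Moreau-Yosida regularization of the max-function `x ↦ max{1, x}`. -/
noncomputable def maxReg (γ x : ℝ) : ℝ :=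
  if 1 / (2 * γ) ≤ x - 1 then x
  else if x - 1 ≤ -(1 / (2 * γ)) then 1
  else 1 + γ / 2 * (x - 1 + 1 / (2 * γ)) ^ 2

abbrev E3 := EuclideanSpace ℝ (Fin 3)

/-- The regularized dual-variable map `Λ_γ(e) = j_c γ e / max_γ{1, γ|e|}`. -/
noncomputable def Lam (jc γ : ℝ) (e : E3) : E3 :=
  (jc * γ / maxReg γ (γ * ‖e‖)) • e

lemma one_le_maxReg {γ : ℝ} (hγ : 0 < γ) (x : ℝ) : 1 ≤ maxReg γ x := by
  have hd : 0 < 1/(2*γ) := by positivity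
  unfold maxReg
  split_ifs with h1 h2
  · linarith
  · linarith
  · nlinarith [sq_nonneg (x - 1 + 1/(2*γ))]

lemma maxReg_pos {γ : ℝ} (hγ : 0 < γ) (x : ℝ) : 0 < maxReg γ x :=
  lt_of_lt_of_le one_pos (one_le_maxReg hγ x)

lemma ratio_mono_aux {γ d : ℝ} (hγ : 0 < γ) (hd : 0 < d) (hd2 : 2*γ*d = 1)
    {a b : ℝ} (ha : 0 ≤ a) (hab : a ≤ b) :
    a * (if d ≤ b - 1 then b else if b - 1 ≤ -d then 1 else 1 + γ/2*(b-1+d)^2) ≤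
    b * (if d ≤ a - 1 then a else if a - 1 ≤ -d then 1 else 1 + γ/2*(a-1+d)^2) := by
  split_ifs
  all_goals first
  | linarith
  | nlinarith
  | nlinarith [sq_nonneg (γ*(a - 1 + d) - 1),
      mul_nonneg (sub_nonneg.2 hab) (sq_nonneg (γ*(a - 1 + d) - 1))]
  | nlinarith [mul_nonneg (show (0:ℝ) ≤ 1 - d - a by linarith)
        (mul_nonneg hγ.le (sq_nonneg (b-1+d))),
      mul_nonneg (mul_nonneg hγ.le (show (0:ℝ) ≤ b - 1 + d by linarith))
        (show (0:ℝ) ≤ 2*d - (b-1+d) by linarith),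
      mul_nonneg (show (0:ℝ) ≤ b - 1 + d by linarith) hd.le,
      mul_nonneg (mul_nonneg hγ.le hd.le) (sq_nonneg (b-1+d)),
      mul_nonneg (mul_nonneg hγ.le hd.le) (show (0:ℝ) ≤ b - 1 + d by linarith)]
  | nlinarith [mul_nonneg (mul_nonneg hγ.le (sub_nonneg.2 hab))
        (mul_nonneg (show (0:ℝ) ≤ 1 + d - a by linarith)
          (show (0:ℝ) ≤ 1 + d by linarith)),
      mul_nonneg (mul_nonneg (mul_nonneg hγ.le (sub_nonneg.2 hab)) ha)
        (show (0:ℝ) ≤ 1 + d - b by linarith)]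

lemma ratio_mono {γ : ℝ} (hγ : 0 < γ) {a b : ℝ} (ha : 0 ≤ a) (hab : a ≤ b) :
    a * maxReg γ b ≤ b * maxReg γ a := by
  have hd : 0 < 1/(2*γ) := by positivity
  have hd2 : 2*γ*(1/(2*γ)) = 1 := by field_simp
  unfold maxReg
  exact ratio_mono_aux hγ hd hd2 ha hab

lemma lam_mono (jc γ : ℝ) (hjc : 0 < jc) (hγ : 0 < γ) (a b : E3) :
    0 ≤ ⟪Lam jc γ a - Lam jc γ b, a - b⟫ := by
  set ma := maxReg γ (γ * ‖a‖) with hma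
  set mb := maxReg γ (γ * ‖b‖) with hmb
  have hmap : 0 < ma := maxReg_pos hγ _
  have hmbp : 0 < mb := maxReg_pos hγ _
  set α := jc * γ / ma with hα
  set β := jc * γ / mb with hβ
  have hαp : 0 < α := div_pos (mul_pos hjc hγ) hmap
  have hβp : 0 < β := div_pos (mul_pos hjc hγ) hmbp
  have key2 : 0 ≤ (α * ‖a‖ - β * ‖b‖) * (‖a‖ - ‖b‖) := by
    rcases le_total ‖a‖ ‖b‖ with h | h
    · have hr := ratio_mono hγ (mul_nonneg hγ.le (norm_nonneg a))
        (mul_le_mul_of_nonneg_left h hγ.le)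
      rw [← hma, ← hmb] at hr
      have h1 : α * ‖a‖ ≤ β * ‖b‖ := by
        rw [hα, hβ, div_mul_eq_mul_div, div_mul_eq_mul_div, div_le_div_iff₀ hmap hmbp]
        nlinarith [mul_le_mul_of_nonneg_left hr (mul_pos hjc hγ).le]
      exact mul_nonneg_iff.mpr (Or.inr ⟨by linarith, by linarith⟩)
    · have hr := ratio_mono hγ (mul_nonneg hγ.le (norm_nonneg b))
        (mul_le_mul_of_nonneg_left h hγ.le)
      rw [← hma, ← hmb] at hr
      have h1 : β * ‖b‖ ≤ α * ‖a‖ := by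
        rw [hα, hβ, div_mul_eq_mul_div, div_mul_eq_mul_div, div_le_div_iff₀ hmbp hmap]
        nlinarith [mul_le_mul_of_nonneg_left hr (mul_pos hjc hγ).le]
      exact mul_nonneg (by linarith) (by linarith)
  have key3 : 0 ≤ (α + β) * (‖a‖ * ‖b‖ - ⟪b, a⟫) :=
    mul_nonneg (by linarith) (by nlinarith [real_inner_le_norm b a])
  show 0 ≤ ⟪α • a - β • b, a - b⟫
  rw [inner_sub_left, inner_sub_right, inner_sub_right, real_inner_smul_left,
    real_inner_smul_left, real_inner_smul_left, real_inner_smul_left,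
    real_inner_self_eq_norm_sq, real_inner_self_eq_norm_sq, real_inner_comm b a]
  nlinarith [key2, key3]

lemma measurable_maxReg (γ : ℝ) : Measurable (maxReg γ) := by
  unfold maxReg
  apply Measurable.ite (measurableSet_le measurable_const (measurable_id.sub measurable_const)) measurable_id
  apply Measurable.ite (measurableSet_le (measurable_id.sub measurable_const) measurable_const) measurable_const
  exact (((measurable_id.sub measurable_const).add measurable_const).pow_const 2).const_mul _ |>.const_add 1

lemma measurable_Lam {jc γ : ℝ} {f : E3 → E3} (hf : Measurable f) :
    Measurable fun x => Lam jc γ (f x) := by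
  unfold Lam
  exact (measurable_const.div ((measurable_maxReg γ).comp (hf.norm.const_mul γ))).smul hf

lemma norm_Lam_le {jc γ : ℝ} (hjc : 0 < jc) (hγ : 0 < γ) (e : E3) :
    ‖Lam jc γ e‖ ≤ jc * γ * ‖e‖ := by
  have hm := one_le_maxReg hγ (γ * ‖e‖)
  have hmp := maxReg_pos hγ (γ * ‖e‖)
  rw [Lam, norm_smul, Real.norm_eq_abs,
    abs_of_nonneg (by positivity : (0:ℝ) ≤ jc * γ / maxReg γ (γ * ‖e‖))]
  have : jc * γ / maxReg γ (γ * ‖e‖) ≤ jc * γ := by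
    rw [div_le_iff₀ hmp]; nlinarith [mul_le_mul_of_nonneg_left hm (mul_pos hjc hγ).le]
  exact mul_le_mul_of_nonneg_right this (norm_nonneg e)

/-- Monotonicity of the superposition of `Λ_γ` in L²(Ω): the integrand
`(Λ_γ(f) - Λ_γ(g)) ⬝ (f - g)` is integrable on Ω and its integral is nonnegative. -/
theorem Lam_superposition_monotone (jc γ : ℝ) (hjc : 0 < jc) (hγ : 0 < γ)
    (Ω : Set E3) (hΩ : MeasurableSet Ω) (f g : E3 → E3)
    (hf : Measurable f) (hg : Measurable g)
    (hf2 : MeasureTheory.IntegrableOn (fun x => ‖f x‖ ^ 2) Ω)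
    (hg2 : MeasureTheory.IntegrableOn (fun x => ‖g x‖ ^ 2) Ω) :
    MeasureTheory.IntegrableOn
      (fun x => ⟪Lam jc γ (f x) - Lam jc γ (g x), f x - g x⟫) Ω ∧
    0 ≤ ∫ x in Ω, ⟪Lam jc γ (f x) - Lam jc γ (g x), f x - g x⟫ := by
  have hmeas : Measurable fun x => ⟪Lam jc γ (f x) - Lam jc γ (g x), f x - g x⟫ :=
    Measurable.inner ((measurable_Lam hf).sub (measurable_Lam hg)) (hf.sub hg)
  constructor
  · apply MeasureTheory.Integrable.mono' ((hf2.add hg2).const_mul (2 * (jc * γ)))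
    · exact hmeas.aestronglyMeasurable
    · filter_upwards with x
      have h1 := abs_real_inner_le_norm (Lam jc γ (f x) - Lam jc γ (g x)) (f x - g x)
      have h2 : ‖Lam jc γ (f x) - Lam jc γ (g x)‖ ≤ jc * γ * (‖f x‖ + ‖g x‖) := by
        calc ‖Lam jc γ (f x) - Lam jc γ (g x)‖ ≤ ‖Lam jc γ (f x)‖ + ‖Lam jc γ (g x)‖ :=
              norm_sub_le _ _
          _ ≤ jc * γ * (‖f x‖ + ‖g x‖) := by
              have := norm_Lam_le hjc hγ (f x)
              have := norm_Lam_le hjc hγ (g x)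
              nlinarith
      have h3 : ‖f x - g x‖ ≤ ‖f x‖ + ‖g x‖ := norm_sub_le _ _
      rw [Real.norm_eq_abs]
      have h4 : ‖Lam jc γ (f x) - Lam jc γ (g x)‖ * ‖f x - g x‖ ≤
          (jc * γ * (‖f x‖ + ‖g x‖)) * (‖f x‖ + ‖g x‖) :=
        mul_le_mul h2 h3 (norm_nonneg _) (by positivity)
      have h5 : (0:ℝ) ≤ jc * γ := by positivity
      simp only [Pi.add_apply]
      nlinarith [mul_nonneg h5 (sq_nonneg (‖f x‖ - ‖g x‖))]
  · exact MeasureTheory.setIntegral_nonneg hΩ fun x _ => lam_mono jc γ hjc hγ (f x) (g x)
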